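/- Let M and N be II₁ factors acting nondegenerately on a Hilbert space H and suppose that P ⊆ M and Q ⊆ N are unital von Neumann subalgebras. Then d(P' ∩ M, Q' ∩ N) ≤ d(M,N) + 2√2·d(P,Q). -/

import Mathlib

namespace KK

variable {H : Type*} [NormedAddCommGroup H] [InnerProductSpace ℂ H] [CompleteSpace H]

/-- The near inclusion `M ⊆_γ N`: every `x ∈ M` is approximated by some `y ∈ N`
with `‖x - y‖ ≤ γ‖x‖`. -/
def NearIncl (M N : Set (H →L[ℂ] H)) (γ : ℝ) : Prop :=
  ∀ x ∈ M, ∃ y ∈ N, ‖x - y‖ ≤ γ * ‖x‖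

/-- The strict near inclusion `M ⊂_γ N`: `M ⊆_γ' N` for some `γ' < γ`. -/
def NearInclLt (M N : Set (H →L[ℂ] H)) (γ : ℝ) : Prop :=
  ∃ γ' < γ, NearIncl M N γ'

/-- The Kadison–Kastler distance between two subalgebras of `B(H)`: the infimum of those
`γ > 0` such that each element of the unit ball of one algebra is within `γ` of the unit
ball of the other. -/
noncomputable def kkDist (M N : Set (H →L[ℂ] H)) : ℝ :=
  sInf {γ : ℝ | 0 < γ ∧
    (∀ x ∈ M, ‖x‖ ≤ 1 → ∃ y ∈ N, ‖y‖ ≤ 1 ∧ ‖x - y‖ < γ) ∧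
    (∀ y ∈ N, ‖y‖ ≤ 1 → ∃ x ∈ M, ‖x‖ ≤ 1 ∧ ‖y - x‖ < γ)}

/-- `τ` is a faithful normal tracial state on the von Neumann algebra `M`.  Normality is
expressed as weak-operator-topology continuity on the closed unit ball of `M`. -/
structure IsFNTrace (M : VonNeumannAlgebra H) (τ : (H →L[ℂ] H) →ₗ[ℂ] ℂ) : Prop where
  map_one : τ 1 = 1
  nonneg : ∀ x ∈ M, 0 ≤ (τ (star x * x)).re
  real : ∀ x ∈ M, (τ (star x * x)).im = 0
  faithful : ∀ x ∈ M, τ (star x * x) = 0 → x = 0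
  tracial : ∀ x ∈ M, ∀ y ∈ M, τ (x * y) = τ (y * x)
  normal : ∀ (ι : Type) (l : Filter ι) (x : ι → H →L[ℂ] H) (y : H →L[ℂ] H),
    (∀ i, x i ∈ M) → (∀ i, ‖x i‖ ≤ 1) → y ∈ M →
    (∀ ξ η : H, Filter.Tendsto (fun i => (inner ℂ ((x i) ξ) η : ℂ)) l (nhds (inner ℂ (y ξ) η : ℂ))) →
    Filter.Tendsto (fun i => τ (x i)) l (nhds (τ y))

/-- The scalar operators `ℂ·1 ⊆ B(H)`. -/
def scalars (H : Type*) [NormedAddCommGroup H] [InnerProductSpace ℂ H] [CompleteSpace H] :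
    Set (H →L[ℂ] H) :=
  Set.range fun c : ℂ => c • (1 : H →L[ℂ] H)

/-- `M` is a II₁ factor: an infinite-dimensional von Neumann algebra with trivial center
admitting a faithful normal tracial state. -/
def IsIIOneFactor (M : VonNeumannAlgebra H) : Prop :=
  ((M : Set (H →L[ℂ] H)) ∩ Set.centralizer (M : Set (H →L[ℂ] H)) = scalars H) ∧
  (¬ ∃ s : Finset (H →L[ℂ] H),
      (M : Set (H →L[ℂ] H)) ⊆ (Submodule.span ℂ (s : Set (H →L[ℂ] H)) : Set (H →L[ℂ] H))) ∧
  ∃ τ : (H →L[ℂ] H) →ₗ[ℂ] ℂ, IsFNTrace M τ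

/-- `M` has separable predual; for a II₁ factor this is equivalent to being generated, as a
von Neumann algebra, by a countable self-adjoint subset. -/
def HasSeparablePredual (M : VonNeumannAlgebra H) : Prop :=
  ∃ S : Set (H →L[ℂ] H), S.Countable ∧ S ⊆ (M : Set (H →L[ℂ] H)) ∧ (∀ x ∈ S, star x ∈ S) ∧
    Set.centralizer (Set.centralizer S) = (M : Set (H →L[ℂ] H))

/-- The normalizer of `A` in `M`: the unitaries `u ∈ M` with `u A u* = A`. -/
def normalizer (A M : Set (H →L[ℂ] H)) : Set (H →L[ℂ] H) :=
  {u | u ∈ M ∧ u ∈ unitary (H →L[ℂ] H) ∧ (fun x => u * x * star u) '' A = A}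

/-- `A` is a regular subalgebra of `M`: its normalizer generates `M` as a von Neumann
algebra (i.e. the double commutant of the normalizer is `M`). -/
def IsRegular (A M : Set (H →L[ℂ] H)) : Prop :=
  Set.centralizer (Set.centralizer (normalizer A M)) = M

/-- `A` is singular in `M`: every normalizing unitary of `A` in `M` lies in `A`. -/
def IsSingular (A M : Set (H →L[ℂ] H)) : Prop :=
  normalizer A M ⊆ A

/-- `A` is a masa in `M`: a maximal abelian von Neumann subalgebra, i.e. `A = A' ∩ M`. -/
def IsMasaIn (A M : VonNeumannAlgebra H) : Prop :=
  (A : Set (H →L[ℂ] H)) ⊆ (M : Set (H →L[ℂ] H)) ∧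
    (A : Set (H →L[ℂ] H)) = Set.centralizer (A : Set (H →L[ℂ] H)) ∩ (M : Set (H →L[ℂ] H))

/-- A Cartan masa is a regular masa. -/
def IsCartan (A M : VonNeumannAlgebra H) : Prop :=
  IsMasaIn A M ∧ IsRegular (A : Set (H →L[ℂ] H)) (M : Set (H →L[ℂ] H))

/-- A subset `P ⊆ B(H)` is amenable (injective) if there is a norm-one linear projection
from `B(H)` onto `P`. -/
def IsAmenableSet (P : Set (H →L[ℂ] H)) : Prop :=
  ∃ E : (H →L[ℂ] H) →L[ℂ] (H →L[ℂ] H), ‖E‖ = 1 ∧ (∀ x, E x ∈ P) ∧ ∀ x ∈ P, E x = x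

/-- A von Neumann algebra is diffuse if it has no nonzero minimal projections. -/
def IsDiffuse (M : VonNeumannAlgebra H) : Prop :=
  ¬ ∃ p : H →L[ℂ] H, p ∈ M ∧ p ≠ 0 ∧ star p = p ∧ p * p = p ∧
    ∀ q : H →L[ℂ] H, q ∈ M → star q = q → q * q = q → q * p = q → q = 0 ∨ q = p

/-- A II₁ factor `M` is solid if every diffuse unital von Neumann subalgebra `P ⊆ M` has
amenable relative commutant `P' ∩ M`. -/
def IsSolid (M : VonNeumannAlgebra H) : Prop :=
  ∀ P : VonNeumannAlgebra H, (P : Set (H →L[ℂ] H)) ⊆ (M : Set (H →L[ℂ] H)) → IsDiffuse P →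
    IsAmenableSet (Set.centralizer (P : Set (H →L[ℂ] H)) ∩ (M : Set (H →L[ℂ] H)))

/-- A II₁ factor `M` is strongly solid if for every diffuse amenable unital von Neumann
subalgebra `B ⊆ M` the von Neumann algebra generated by the normalizer of `B` in `M` is
amenable. -/
def IsStronglySolid (M : VonNeumannAlgebra H) : Prop :=
  ∀ B : VonNeumannAlgebra H, (B : Set (H →L[ℂ] H)) ⊆ (M : Set (H →L[ℂ] H)) → IsDiffuse B →
    IsAmenableSet (B : Set (H →L[ℂ] H)) →
    IsAmenableSet
      (Set.centralizer (Set.centralizer (normalizer (B : Set (H →L[ℂ] H)) (M : Set (H →L[ℂ] H)))))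

/-- The 2-norm `‖x‖_{2,M} = τ(x*x)^{1/2}` associated to a trace `τ`. -/
noncomputable def norm2 (τ : (H →L[ℂ] H) →ₗ[ℂ] ℂ) (x : H →L[ℂ] H) : ℝ :=
  Real.sqrt (τ (star x * x)).re

/-- Property Γ of Murray and von Neumann for a II₁ factor `M`, with respect to its trace. -/
def HasGamma (M : VonNeumannAlgebra H) : Prop :=
  ∀ τ : (H →L[ℂ] H) →ₗ[ℂ] ℂ, IsFNTrace M τ →
    ∀ (n : ℕ) (x : Fin n → H →L[ℂ] H), (∀ i, x i ∈ M) → ∀ ε : ℝ, 0 < ε →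
      ∃ u : H →L[ℂ] H, u ∈ M ∧ u ∈ unitary (H →L[ℂ] H) ∧ τ u = 0 ∧
        ∀ i, norm2 τ (u * x i - x i * u) < ε

/-- `M` is in standard position on `H` (`dim_M H = 1`): there is a unit vector `ξ ∈ H`
cyclic for `M` such that the associated vector state is the trace of `M`. -/
def IsStandardPosition (M : VonNeumannAlgebra H) : Prop :=
  ∃ τ : (H →L[ℂ] H) →ₗ[ℂ] ℂ, IsFNTrace M τ ∧ ∃ ξ : H, ‖ξ‖ = 1 ∧
    Dense {y : H | ∃ x ∈ (M : Set (H →L[ℂ] H)), x ξ = y} ∧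
    ∀ x ∈ (M : Set (H →L[ℂ] H)), (inner ℂ ξ (x ξ) : ℂ) = τ x

/-- `P` and `Q` commute elementwise. -/
def Commutes (P Q : Set (H →L[ℂ] H)) : Prop :=
  ∀ p ∈ P, ∀ q ∈ Q, p * q = q * p

/-- `M` is generated, as a von Neumann algebra, by `P` and `Q`: `(P ∪ Q)'' = M`. -/
def Generates2 (P Q M : Set (H →L[ℂ] H)) : Prop :=
  Set.centralizer (Set.centralizer (P ∪ Q)) = M

/-- A subset of `B(H)` is a II₁ factor if it is the carrier of a von Neumann algebra
which is a II₁ factor. -/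
def IsIIOneFactorSet (S : Set (H →L[ℂ] H)) : Prop :=
  ∃ A : VonNeumannAlgebra H, (A : Set (H →L[ℂ] H)) = S ∧ IsIIOneFactor A

/-- A II₁ factor is prime if it is not generated by two commuting II₁ subfactors. -/
def IsPrime (M : VonNeumannAlgebra H) : Prop :=
  ¬ ∃ P Q : VonNeumannAlgebra H, IsIIOneFactor P ∧ IsIIOneFactor Q ∧
    (P : Set (H →L[ℂ] H)) ⊆ (M : Set (H →L[ℂ] H)) ∧
    (Q : Set (H →L[ℂ] H)) ⊆ (M : Set (H →L[ℂ] H)) ∧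
    Commutes (P : Set (H →L[ℂ] H)) (Q : Set (H →L[ℂ] H)) ∧
    Generates2 (P : Set (H →L[ℂ] H)) (Q : Set (H →L[ℂ] H)) (M : Set (H →L[ℂ] H))

/-- The operator on `H ⊕₂ ⋯ ⊕₂ H` given by a matrix of operators on `H`. -/
noncomputable def matOp {n : ℕ} (x : Fin n → Fin n → (H →L[ℂ] H)) :
    (PiLp 2 fun _ : Fin n => H) →L[ℂ] (PiLp 2 fun _ : Fin n => H) :=
  ((PiLp.continuousLinearEquiv 2 ℂ fun _ : Fin n => H).symm :
      (∀ _ : Fin n, H) →L[ℂ] PiLp 2 fun _ : Fin n => H).comp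
    ((ContinuousLinearMap.pi fun i => ∑ j, (x i j).comp (ContinuousLinearMap.proj j)).comp
      ((PiLp.continuousLinearEquiv 2 ℂ fun _ : Fin n => H) :
        (PiLp 2 fun _ : Fin n => H) →L[ℂ] ∀ _ : Fin n, H))

/-- The `n`-fold matrix amplification `M ⊗ 𝕄ₙ` of `M ⊆ B(H)`, acting on `H^n`. -/
def ampl (n : ℕ) (M : Set (H →L[ℂ] H)) :
    Set ((PiLp 2 fun _ : Fin n => H) →L[ℂ] (PiLp 2 fun _ : Fin n => H)) :=
  {T | ∃ x : Fin n → Fin n → (H →L[ℂ] H), (∀ i j, x i j ∈ M) ∧ T = matOp x}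

/-- The completely bounded distance `d_cb(M,N) = supₙ d(M ⊗ 𝕄ₙ, N ⊗ 𝕄ₙ)`. -/
noncomputable def kkDistCb (M N : Set (H →L[ℂ] H)) : ℝ :=
  ⨆ n : ℕ, kkDist (ampl (n + 1) M) (ampl (n + 1) N)

/-
Take `x ∈ P' ∩ M` and `y ∈ N`, both in the unit ball, with `‖x - y‖ < γ₁`. A unitary `u ∈ Q` lies
within `γ₂` of some `w ∈ P`, which commutes with `x`, so
`‖x - u y u*‖ ≤ ‖x - y‖ + ‖[x, u - w]‖ ≤ γ₁ + 2γ₂`. This bound persists on the convex hull `C` of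
the orbit `{u y u*}` and under weak-operator limits. A sequence in `C` minimizing the trace 2-norm
is asymptotically `Ad u`-invariant in 2-norm by the parallelogram law, so by normality and
faithfulness of the trace its weak-operator limit points are fixed by every `Ad u`. Such a limit
lies in `Q' ∩ N` within `γ₁ + 2γ₂ < γ₁ + 2√2 γ₂` of `x`.
-/

open Filter Topology
open scoped InnerProductSpace

section WeakOperatorTopology

variable {E : Type*} [NormedAddCommGroup E] [InnerProductSpace ℂ E] {ι : Type*}

-- Weak-operator convergence, phrased as in `IsFNTrace.normal`.
def TendstoWOT (c : ι → E →L[ℂ] E) (l : Filter ι) (m : E →L[ℂ] E) : Prop :=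
  ∀ ξ η : E, Tendsto (fun i => ⟪c i ξ, η⟫_ℂ) l (𝓝 ⟪m ξ, η⟫_ℂ)

variable {c d : ι → E →L[ℂ] E} {l : Filter ι} {m n : E →L[ℂ] E}

lemma tendstoWOT_const (a : E →L[ℂ] E) : TendstoWOT (fun _ => a) l a :=
  fun _ _ => tendsto_const_nhds

lemma TendstoWOT.sub (hc : TendstoWOT c l m) (hd : TendstoWOT d l n) :
    TendstoWOT (fun i => c i - d i) l (m - n) := fun ξ η => by
  simpa [inner_sub_left] using (hc ξ η).sub (hd ξ η)

lemma TendstoWOT.const_smul (hc : TendstoWOT c l m) (z : ℂ) :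
    TendstoWOT (fun i => z • c i) l (z • m) := fun ξ η => by
  simpa [inner_smul_left] using (hc ξ η).mul_const (starRingEnd ℂ z)

lemma TendstoWOT.mul_const (hc : TendstoWOT c l m) (a : E →L[ℂ] E) :
    TendstoWOT (fun i => c i * a) l (m * a) :=
  fun ξ η => hc (a ξ) η

lemma TendstoWOT.unique [l.NeBot] (hm : TendstoWOT c l m) (hn : TendstoWOT c l n) : m = n :=
  ContinuousLinearMap.ext fun ξ => ext_inner_right ℂ fun η =>
    tendsto_nhds_unique (hm ξ η) (hn ξ η)

lemma norm_inner_apply_le {a : E →L[ℂ] E} {R : ℝ} (ha : ‖a‖ ≤ R) (ξ η : E) :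
    ‖⟪a ξ, η⟫_ℂ‖ ≤ R * ‖ξ‖ * ‖η‖ :=
  (norm_inner_le_norm _ _).trans
    (mul_le_mul_of_nonneg_right (a.le_of_opNorm_le ha ξ) (norm_nonneg η))

lemma TendstoWOT.norm_le [l.NeBot] (hc : TendstoWOT c l m) {R : ℝ} (hR : ∀ i, ‖c i‖ ≤ R) :
    ‖m‖ ≤ R := by
  obtain ⟨i⟩ := l.nonempty_of_neBot
  have hR0 : 0 ≤ R := (norm_nonneg _).trans (hR i)
  refine m.opNorm_le_bound hR0 fun ξ => ?_
  have h : ‖⟪m ξ, m ξ⟫_ℂ‖ ≤ R * ‖ξ‖ * ‖m ξ‖ :=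
    le_of_tendsto (hc ξ (m ξ)).norm
      (Eventually.of_forall fun i => norm_inner_apply_le (hR i) ξ (m ξ))
  have hsq : ‖m ξ‖ * ‖m ξ‖ ≤ R * ‖ξ‖ * ‖m ξ‖ := by
    rw [← @inner_self_eq_norm_mul_norm ℂ]
    exact (RCLike.re_le_norm _).trans h
  nlinarith [norm_nonneg (m ξ), mul_nonneg hR0 (norm_nonneg ξ)]

variable [CompleteSpace E]

lemma TendstoWOT.const_mul (hc : TendstoWOT c l m) (a : E →L[ℂ] E) :
    TendstoWOT (fun i => a * c i) l (a * m) := fun ξ η => by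
  have h := hc ξ (ContinuousLinearMap.adjoint a η)
  simp only [ContinuousLinearMap.adjoint_inner_right] at h
  exact h

lemma TendstoWOT.star (hc : TendstoWOT c l m) : TendstoWOT (fun i => star (c i)) l (star m) :=
  fun ξ η => by
    have h (a : E →L[ℂ] E) : ⟪Star.star a ξ, η⟫_ℂ = starRingEnd ℂ ⟪a η, ξ⟫_ℂ := by
      rw [ContinuousLinearMap.star_eq_adjoint, ContinuousLinearMap.adjoint_inner_left,
        inner_conj_symm]
    simp only [h]
    exact (Complex.continuous_conj.tendsto _).comp (hc η ξ)

lemma TendstoWOT.mem [l.NeBot] (W : VonNeumannAlgebra E) (hc : TendstoWOT c l m)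
    (hW : ∀ i, c i ∈ W) : m ∈ W := by
  rw [← SetLike.mem_coe, ← W.centralizer_centralizer]
  intro s hs
  have hcs : (fun i => s * c i) = fun i => c i * s := funext fun i => (hs _ (hW i)).symm
  exact (hc.const_mul s).unique (hcs ▸ hc.mul_const s)

lemma exists_tendstoWOT_of_norm_le (U : Ultrafilter ι) {R : ℝ} (hR : ∀ i, ‖c i‖ ≤ R) :
    ∃ m, TendstoWOT c U m := by
  have hlim (ξ η : E) : ∃ z : ℂ, Tendsto (fun i => ⟪c i ξ, η⟫_ℂ) U (𝓝 z) := by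
    obtain ⟨z, -, hz⟩ := (isCompact_closedBall (0 : ℂ) (R * ‖ξ‖ * ‖η‖)).ultrafilter_le_nhds
      (U.map fun i => ⟪c i ξ, η⟫_ℂ) (by
        rw [Ultrafilter.coe_map, le_principal_iff]
        exact mem_map.2 (univ_mem' fun i =>
          mem_closedBall_zero_iff.2 (norm_inner_apply_le (hR i) ξ η)))
    exact ⟨z, hz⟩
  choose B hB using hlim
  let B' : E →L⋆[ℂ] E →L[ℂ] ℂ := LinearMap.mkContinuous₂
    (LinearMap.mk₂'ₛₗ (starRingEnd ℂ) (RingHom.id ℂ) B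
      (fun ξ₁ ξ₂ η => tendsto_nhds_unique (hB _ η) (by
        simpa only [map_add, inner_add_left] using (hB ξ₁ η).add (hB ξ₂ η)))
      (fun z ξ η => tendsto_nhds_unique (hB _ η) (by
        simpa only [map_smul, inner_smul_left, smul_eq_mul] using (hB ξ η).const_mul _))
      (fun ξ η₁ η₂ => tendsto_nhds_unique (hB ξ _) (by
        simpa only [inner_add_right] using (hB ξ η₁).add (hB ξ η₂)))
      (fun z ξ η => tendsto_nhds_unique (hB ξ _) (by
        simpa only [inner_smul_right, smul_eq_mul, RingHom.id_apply]
          using (hB ξ η).const_mul z)))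
    R fun ξ η => le_of_tendsto (hB ξ η).norm
      (Eventually.of_forall fun i => norm_inner_apply_le (hR i) ξ η)
  exact ⟨InnerProductSpace.continuousLinearMapOfBilin B', fun ξ η => by
    simpa [B'] using hB ξ η⟩

end WeakOperatorTopology

theorem _root_.VonNeumannAlgebra.isClosed (W : VonNeumannAlgebra H) :
    IsClosed (W : Set (H →L[ℂ] H)) :=
  W.centralizer_centralizer ▸ Set.isClosed_centralizer _

lemma mem_centralizer_of_forall_unitary (W : VonNeumannAlgebra H) {m : H →L[ℂ] H}
    (h : ∀ u ∈ W, u ∈ unitary (H →L[ℂ] H) → u * m = m * u) :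
    m ∈ Set.centralizer (W : Set (H →L[ℂ] H)) := by
  -- makes `W` a C⋆-algebra, which is spanned by its unitaries
  have : IsClosed (W.toStarSubalgebra : Set (H →L[ℂ] H)) := W.isClosed
  suffices ∀ q : W.toStarSubalgebra, (q : H →L[ℂ] H) * m = m * q from fun q hq => this ⟨q, hq⟩
  intro q
  have hspan : q ∈ Submodule.span ℂ (unitary W.toStarSubalgebra : Set W.toStarSubalgebra) := by
    rw [CStarAlgebra.span_unitary]; trivial
  induction hspan using Submodule.span_induction with
  | mem u hu =>
    exact h u u.2 (Unitary.mem_iff.2 ⟨congrArg Subtype.val (Unitary.mem_iff.1 hu).1,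
      congrArg Subtype.val (Unitary.mem_iff.1 hu).2⟩)
  | zero => simp
  | add a b _ _ ha hb => simp only [AddMemClass.coe_add, add_mul, mul_add, ha, hb]
  | smul z a _ ha => simp only [SetLike.val_smul, smul_mul_assoc, mul_smul_comm, ha]

lemma norm_le_one_of_mem_unitary {u : H →L[ℂ] H} (hu : u ∈ unitary (H →L[ℂ] H)) :
    ‖u‖ ≤ 1 := by
  calc ‖u‖ = ‖u * 1‖ := by rw [mul_one]
    _ = ‖(1 : H →L[ℂ] H)‖ := CStarRing.norm_mem_unitary_mul 1 hu
    _ ≤ 1 := ContinuousLinearMap.norm_id_le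

noncomputable def norm2Sq (τ : (H →L[ℂ] H) →ₗ[ℂ] ℂ) (x : H →L[ℂ] H) : ℝ :=
  (τ (star x * x)).re

lemma norm2Sq_sub (τ : (H →L[ℂ] H) →ₗ[ℂ] ℂ) (a b : H →L[ℂ] H) :
    norm2Sq τ (a - b) =
      2 * norm2Sq τ a + 2 * norm2Sq τ b - 4 * norm2Sq τ ((1 / 2 : ℝ) • a + (1 / 2 : ℝ) • b) := by
  have hmid : star ((1 / 2 : ℝ) • a + (1 / 2 : ℝ) • b) * ((1 / 2 : ℝ) • a + (1 / 2 : ℝ) • b) =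
      (4⁻¹ : ℂ) • (star (a + b) * (a + b)) := by
    rw [← smul_add, ← Complex.coe_smul, star_smul, smul_mul_smul_comm]
    norm_num
  have hsum : star (a - b) * (a - b) =
      star a * a + star a * a + star b * b + star b * b - star (a + b) * (a + b) := by
    rw [star_sub, star_add]; noncomm_ring
  simp only [norm2Sq, hmid, hsum, map_sub, map_add, map_smul, smul_eq_mul, Complex.sub_re,
    Complex.add_re, Complex.mul_re]
  norm_num
  ring

section Trace

variable {W : VonNeumannAlgebra H} {τ : (H →L[ℂ] H) →ₗ[ℂ] ℂ}

lemma IsFNTrace.norm2Sq_conj_unitary (ht : IsFNTrace W τ) {u c : H →L[ℂ] H} (hu : u ∈ W)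
    (hu' : u ∈ unitary (H →L[ℂ] H)) (hc : c ∈ W) :
    norm2Sq τ (u * c * star u) = norm2Sq τ c := by
  have hconj : star (u * c * star u) * (u * c * star u) = u * (star c * c * star u) := calc
    _ = u * star c * (star u * u) * c * star u := by simp only [star_mul, star_star]; noncomm_ring
    _ = u * (star c * c * star u) := by rw [Unitary.star_mul_self_of_mem hu', mul_one]; noncomm_ring
  rw [norm2Sq, norm2Sq, hconj, ht.tracial u hu _ (mul_mem (mul_mem (star_mem hc) hc) (star_mem hu)),
    mul_assoc, Unitary.star_mul_self_of_mem hu', mul_one]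

lemma IsFNTrace.tendsto_of_tendstoWOT (ht : IsFNTrace W τ) {ι : Type} {l : Filter ι}
    {x : ι → H →L[ℂ] H} {y : H →L[ℂ] H} (hx : ∀ i, x i ∈ W) (hy : y ∈ W) {R : ℝ}
    (hR : ∀ i, ‖x i‖ ≤ R) (hxy : TendstoWOT x l y) :
    Tendsto (fun i => τ (x i)) l (𝓝 (τ y)) := by
  set r := max R 1
  have hr : 0 < r := lt_max_of_lt_right one_pos
  have h := ht.normal ι l (fun i => (r⁻¹ : ℂ) • x i) ((r⁻¹ : ℂ) • y)
    (fun i => W.toStarSubalgebra.smul_mem (hx i) _) (fun i => ?_)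
    (W.toStarSubalgebra.smul_mem hy _) (hxy.const_smul _)
  · simp only [map_smul, smul_eq_mul] at h
    simpa [← mul_assoc, hr.ne'] using h.const_mul (r : ℂ)
  · rw [norm_smul, norm_inv, Complex.norm_real, Real.norm_of_nonneg hr.le]
    exact inv_mul_le_one_of_le₀ ((hR i).trans (le_max_left R 1)) hr.le

lemma IsFNTrace.eq_zero_of_tendstoWOT (ht : IsFNTrace W τ) {ι : Type} {l : Filter ι} [l.NeBot]
    {a : ι → H →L[ℂ] H} {b : H →L[ℂ] H} (ha : ∀ i, a i ∈ W) (hb : b ∈ W) {R : ℝ}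
    (hR : ∀ i, ‖a i‖ ≤ R) (hab : TendstoWOT a l b)
    (h0 : Tendsto (fun i => norm2Sq τ (a i)) l (𝓝 0)) : b = 0 := by
  have h₁ : Tendsto (fun i => τ (star b * a i)) l (𝓝 (τ (star b * b))) :=
    ht.tendsto_of_tendstoWOT (fun i => mul_mem (star_mem hb) (ha i)) (mul_mem (star_mem hb) hb)
      (R := ‖b‖ * R) (fun i => (norm_mul_le _ _).trans (by rw [norm_star]; gcongr; exact hR i))
      (hab.const_mul _)
  have h₂ : Tendsto (fun i => τ (star (a i) * b)) l (𝓝 (τ (star b * b))) :=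
    ht.tendsto_of_tendstoWOT (fun i => mul_mem (star_mem (ha i)) hb) (mul_mem (star_mem hb) hb)
      (R := R * ‖b‖) (fun i => (norm_mul_le _ _).trans (by rw [norm_star]; gcongr; exact hR i))
      (hab.star.mul_const _)
  -- in the limit this reads `2 ‖b‖₂² ≤ ‖b‖₂²`
  have hcross (i : ι) : (τ (star b * a i)).re + (τ (star (a i) * b)).re ≤
      norm2Sq τ b + norm2Sq τ (a i) := by
    have h := ht.nonneg _ (sub_mem hb (ha i))
    rw [star_sub, show (star b - star (a i)) * (b - a i) = star b * b + star (a i) * a i -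
      star b * a i - star (a i) * b by noncomm_ring] at h
    simp only [map_sub, map_add, Complex.sub_re, Complex.add_re] at h
    simp only [norm2Sq]
    linarith
  have hle := le_of_tendsto_of_tendsto'
    (((Complex.continuous_re.tendsto _).comp h₁).add ((Complex.continuous_re.tendsto _).comp h₂))
    (tendsto_const_nhds.add h0) hcross
  have hb0 : norm2Sq τ b = 0 := by
    refine le_antisymm ?_ (ht.nonneg b hb)
    simp only [add_zero] at hle
    unfold norm2Sq at hle ⊢
    linarith
  exact ht.faithful b hb (Complex.ext hb0 (ht.real b hb))

end Trace

lemma norm_sub_conj_unitary_le {A : Type*} [NormedRing A] [StarRing A] [CStarRing A]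
    {x y u w : A} (hu : u ∈ unitary A) (hxw : w * x = x * w) (hx : ‖x‖ ≤ 1) :
    ‖x - u * y * star u‖ ≤ ‖x - y‖ + 2 * ‖u - w‖ := by
  have hcomm : x * u - u * x = x * (u - w) - (u - w) * x := by
    rw [mul_sub, sub_mul, hxw]; abel
  have hsplit : x - u * y * star u = u * (x - y) * star u + (x * u - u * x) * star u := by
    nth_rewrite 1 [← mul_one x, ← Unitary.mul_star_self_of_mem hu]
    noncomm_ring
  have hstar := Unitary.star_mem hu
  calc ‖x - u * y * star u‖
      ≤ ‖u * (x - y) * star u‖ + ‖(x * u - u * x) * star u‖ := hsplit ▸ norm_add_le _ _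
    _ = ‖x - y‖ + ‖x * (u - w) - (u - w) * x‖ := by
      rw [CStarRing.norm_mul_mem_unitary _ hstar, CStarRing.norm_mul_mem_unitary _ hstar,
        CStarRing.norm_mem_unitary_mul _ hu, hcomm]
    _ ≤ ‖x - y‖ + (‖x‖ * ‖u - w‖ + ‖u - w‖ * ‖x‖) := by
      gcongr
      exact (norm_sub_le _ _).trans (add_le_add (norm_mul_le _ _) (norm_mul_le _ _))
    _ ≤ ‖x - y‖ + 2 * ‖u - w‖ := by nlinarith [norm_nonneg (u - w)]

def unitaryOrbit (Q : VonNeumannAlgebra H) (y : H →L[ℂ] H) : Set (H →L[ℂ] H) :=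
  {s | ∃ u ∈ Q, u ∈ unitary (H →L[ℂ] H) ∧ u * y * star u = s}

lemma conj_mem_convexHull_unitaryOrbit {Q : VonNeumannAlgebra H} {y u c : H →L[ℂ] H}
    (hu : u ∈ Q) (hu' : u ∈ unitary (H →L[ℂ] H)) (hc : c ∈ convexHull ℝ (unitaryOrbit Q y)) :
    u * c * star u ∈ convexHull ℝ (unitaryOrbit Q y) := by
  let adU : (H →L[ℂ] H) →ₗ[ℝ] H →L[ℂ] H :=
    (LinearMap.mulLeft ℝ u).comp (LinearMap.mulRight ℝ (star u))
  have horbit : adU '' unitaryOrbit Q y ⊆ unitaryOrbit Q y := by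
    rintro _ ⟨_, ⟨v, hv, hv', rfl⟩, rfl⟩
    refine ⟨u * v, mul_mem hu hv, mul_mem hu' hv', ?_⟩
    simp only [adU, LinearMap.comp_apply, LinearMap.mulLeft_apply, LinearMap.mulRight_apply,
      star_mul]
    noncomm_ring
  have himage := adU.image_convexHull (unitaryOrbit Q y) ▸ Set.mem_image_of_mem adU hc
  simpa [adU, mul_assoc] using convexHull_mono horbit himage

lemma _root_.VonNeumannAlgebra.convex (W : VonNeumannAlgebra H) :
    Convex ℝ (W : Set (H →L[ℂ] H)) :=
  ((W.toStarSubalgebra.toSubalgebra.toSubmodule).restrictScalars ℝ).convex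

section Averaging

variable {N Q : VonNeumannAlgebra H} {τ : (H →L[ℂ] H) →ₗ[ℂ] ℂ}

lemma IsFNTrace.conj_eq_of_tendstoWOT_of_minimizing (ht : IsFNTrace N τ)
    {C : Set (H →L[ℂ] H)} (hC : Convex ℝ C) (hCN : C ⊆ N) {u : H →L[ℂ] H} (hu : u ∈ N)
    (hu' : u ∈ unitary (H →L[ℂ] H)) (hCu : ∀ c ∈ C, u * c * star u ∈ C)
    {c : ℕ → H →L[ℂ] H} (hcC : ∀ k, c k ∈ C) (hc : ∀ k, ‖c k‖ ≤ 1)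
    (hmin : Tendsto (fun k => norm2Sq τ (c k)) atTop (𝓝 (sInf (norm2Sq τ '' C))))
    {U : Ultrafilter ℕ} (hU : (U : Filter ℕ) ≤ atTop) {m : H →L[ℂ] H} (hm : TendstoWOT c U m) :
    u * m * star u = m := by
  set δ := sInf (norm2Sq τ '' C)
  have hδ : ∀ c ∈ C, δ ≤ norm2Sq τ c := fun c hc =>
    csInf_le ⟨0, by rintro _ ⟨c, hc, rfl⟩; exact ht.nonneg c (hCN hc)⟩ ⟨c, hc, rfl⟩
  have hdN (k : ℕ) : u * c k * star u - c k ∈ N :=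
    sub_mem (mul_mem (mul_mem hu (hCN (hcC k))) (star_mem hu)) (hCN (hcC k))
  -- the parallelogram law at the midpoint of `u cₖ u*` and `cₖ`, which lies in `C`
  have hdist (k : ℕ) : norm2Sq τ (u * c k * star u - c k) ≤ 4 * (norm2Sq τ (c k) - δ) := by
    have hmid := hδ _ (hC (hCu _ (hcC k)) (hcC k) (by norm_num : (0 : ℝ) ≤ 1 / 2)
      (by norm_num : (0 : ℝ) ≤ 1 / 2) (by norm_num))
    rw [norm2Sq_sub, ht.norm2Sq_conj_unitary hu hu' (hCN (hcC k))]
    linarith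
  have hdist0 : Tendsto (fun k => norm2Sq τ (u * c k * star u - c k)) atTop (𝓝 0) := by
    refine squeeze_zero (fun k => ht.nonneg _ (hdN k)) hdist ?_
    simpa using (hmin.sub_const δ).const_mul 4
  have hnorm (k : ℕ) : ‖u * c k * star u - c k‖ ≤ 2 := calc
    _ ≤ ‖u * c k * star u‖ + ‖c k‖ := norm_sub_le _ _
    _ = ‖c k‖ + ‖c k‖ := by
      rw [CStarRing.norm_mul_mem_unitary _ (Unitary.star_mem hu'),
        CStarRing.norm_mem_unitary_mul _ hu']
    _ ≤ 2 := by linarith [hc k]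
  have hmN : m ∈ N := hm.mem N fun k => hCN (hcC k)
  exact sub_eq_zero.1 (ht.eq_zero_of_tendstoWOT (l := U) hdN
    (sub_mem (mul_mem (mul_mem hu hmN) (star_mem hu)) hmN) hnorm
    (((hm.const_mul u).mul_const (star u)).sub hm) (hdist0.mono_left hU))

theorem IsFNTrace.exists_mem_centralizer_inter_of_forall_conj_near (ht : IsFNTrace N τ)
    (hQN : (Q : Set (H →L[ℂ] H)) ⊆ N) {x y : H →L[ℂ] H} (hy : y ∈ N) (hy1 : ‖y‖ ≤ 1) {B : ℝ}
    (hB : ∀ u ∈ Q, u ∈ unitary (H →L[ℂ] H) → ‖x - u * y * star u‖ ≤ B) :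
    ∃ m ∈ Set.centralizer (Q : Set (H →L[ℂ] H)) ∩ N, ‖m‖ ≤ 1 ∧ ‖x - m‖ ≤ B := by
  set C := convexHull ℝ (unitaryOrbit Q y)
  have hCN : C ⊆ (N : Set (H →L[ℂ] H)) ∩ Metric.closedBall 0 1 ∩ Metric.closedBall x B := by
    refine convexHull_min ?_
      ((N.convex.inter (convex_closedBall 0 1)).inter (convex_closedBall x B))
    rintro _ ⟨u, hu, hu', rfl⟩
    refine ⟨⟨mul_mem (mul_mem (hQN hu) hy) (star_mem (hQN hu)), ?_⟩, ?_⟩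
    · rw [mem_closedBall_zero_iff, CStarRing.norm_mul_mem_unitary _ (Unitary.star_mem hu'),
        CStarRing.norm_mem_unitary_mul _ hu']
      exact hy1
    · rw [Metric.mem_closedBall, dist_comm, dist_eq_norm]
      exact hB u hu hu'
  have hyC : y ∈ C := subset_convexHull ℝ _ ⟨1, one_mem Q, one_mem _, by simp⟩
  obtain ⟨c, hcC, hmin⟩ : ∃ c : ℕ → H →L[ℂ] H, (∀ k, c k ∈ C) ∧
      Tendsto (fun k => norm2Sq τ (c k)) atTop (𝓝 (sInf (norm2Sq τ '' C))) := by
    obtain ⟨s, -, hs, hsC⟩ := exists_seq_tendsto_sInf (S := norm2Sq τ '' C) ⟨_, y, hyC, rfl⟩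
      ⟨(0 : ℝ), by rintro _ ⟨c, hc, rfl⟩; exact ht.nonneg c (hCN hc).1.1⟩
    choose c hcC hcs using hsC
    exact ⟨c, hcC, (funext hcs : (fun k => norm2Sq τ (c k)) = s) ▸ hs⟩
  have hc1 (k : ℕ) : ‖c k‖ ≤ 1 := mem_closedBall_zero_iff.1 (hCN (hcC k)).1.2
  obtain ⟨m, hm⟩ := exists_tendstoWOT_of_norm_le (Ultrafilter.of (atTop : Filter ℕ)) hc1
  refine ⟨m, ⟨mem_centralizer_of_forall_unitary Q fun u hu hu' => ?_,
    hm.mem N fun k => (hCN (hcC k)).1.1⟩, hm.norm_le hc1,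
    ((tendstoWOT_const x).sub hm).norm_le fun k => ?_⟩
  · have hfix := ht.conj_eq_of_tendstoWOT_of_minimizing (convex_convexHull ℝ _)
      (fun c hc => (hCN hc).1.1) (hQN hu) hu'
      (fun c hc => conj_mem_convexHull_unitaryOrbit hu hu' hc) hcC hc1 hmin
      (Ultrafilter.of_le _) hm
    calc u * m = u * m * star u * u := by
          rw [mul_assoc _ (star u), Unitary.star_mul_self_of_mem hu', mul_one]
      _ = m * u := by rw [hfix]
  · rw [← dist_eq_norm, dist_comm]
    exact (hCN (hcC k)).2

theorem IsFNTrace.exists_mem_centralizer_inter_near (ht : IsFNTrace N τ)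
    (hQN : (Q : Set (H →L[ℂ] H)) ⊆ N) {P M : Set (H →L[ℂ] H)} {γ₁ γ₂ : ℝ}
    (hMN : ∀ x ∈ M, ‖x‖ ≤ 1 → ∃ y ∈ (N : Set (H →L[ℂ] H)), ‖y‖ ≤ 1 ∧ ‖x - y‖ < γ₁)
    (hQP : ∀ u ∈ (Q : Set (H →L[ℂ] H)), ‖u‖ ≤ 1 → ∃ w ∈ P, ‖w‖ ≤ 1 ∧ ‖u - w‖ < γ₂)
    {x : H →L[ℂ] H} (hx : x ∈ Set.centralizer P ∩ M) (hx1 : ‖x‖ ≤ 1) :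
    ∃ m ∈ Set.centralizer (Q : Set (H →L[ℂ] H)) ∩ N, ‖m‖ ≤ 1 ∧ ‖x - m‖ ≤ γ₁ + 2 * γ₂ := by
  obtain ⟨y, hy, hy1, hxy⟩ := hMN x hx.2 hx1
  refine ht.exists_mem_centralizer_inter_of_forall_conj_near hQN hy hy1 fun u hu hu' => ?_
  obtain ⟨w, hw, -, huw⟩ := hQP u hu (norm_le_one_of_mem_unitary hu')
  have := norm_sub_conj_unitary_le (y := y) hu' (hx.1 w hw) hx1
  linarith

end Averaging

lemma le_sInf_add_mul_sInf {S T : Set ℝ} (hS : S.Nonempty) (hT : T.Nonempty) {c z : ℝ}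
    (hc : 0 < c) (h : ∀ s ∈ S, ∀ t ∈ T, z ≤ s + c * t) : z ≤ sInf S + c * sInf T := by
  have hT' (s : ℝ) (hs : s ∈ S) : (z - s) / c ≤ sInf T :=
    le_csInf hT fun t ht => by rw [div_le_iff₀ hc]; linarith [h s hs t ht]
  have hS' : z - c * sInf T ≤ sInf S := le_csInf hS fun s hs => by
    have := hT' s hs
    rw [div_le_iff₀ hc] at this
    linarith
  linarith

section KadisonKastler

variable {E : Type*} [NormedAddCommGroup E] [InnerProductSpace ℂ E]

def KKAdmissible (A B : Set (E →L[ℂ] E)) (γ : ℝ) : Prop :=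
  0 < γ ∧ (∀ x ∈ A, ‖x‖ ≤ 1 → ∃ y ∈ B, ‖y‖ ≤ 1 ∧ ‖x - y‖ < γ) ∧
    (∀ y ∈ B, ‖y‖ ≤ 1 → ∃ x ∈ A, ‖x‖ ≤ 1 ∧ ‖y - x‖ < γ)

lemma kkDist_eq_sInf (A B : Set (E →L[ℂ] E)) : kkDist A B = sInf {γ | KKAdmissible A B γ} :=
  rfl

lemma kkDist_le {A B : Set (E →L[ℂ] E)} {γ : ℝ} (h : KKAdmissible A B γ) : kkDist A B ≤ γ :=
  csInf_le ⟨0, fun _ h => h.1.le⟩ h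

lemma kkAdmissible_two {A B : Set (E →L[ℂ] E)} (hA : 0 ∈ A) (hB : 0 ∈ B) :
    KKAdmissible A B 2 :=
  ⟨two_pos, fun _ _ hx => ⟨0, hB, by simp, by simpa using hx.trans_lt one_lt_two⟩,
    fun _ _ hy => ⟨0, hA, by simp, by simpa using hy.trans_lt one_lt_two⟩⟩

end KadisonKastler

theorem statement10 (M N P Q : VonNeumannAlgebra H)
    (hM : IsIIOneFactor M) (hN : IsIIOneFactor N)
    (hPM : (P : Set (H →L[ℂ] H)) ⊆ (M : Set (H →L[ℂ] H))) (hQN : (Q : Set (H →L[ℂ] H)) ⊆ (N : Set (H →L[ℂ] H))) :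
    kkDist (Set.centralizer (P : Set (H →L[ℂ] H)) ∩ (M : Set (H →L[ℂ] H))) (Set.centralizer (Q : Set (H →L[ℂ] H)) ∩ (N : Set (H →L[ℂ] H))) ≤
      kkDist (M : Set (H →L[ℂ] H)) (N : Set (H →L[ℂ] H)) + 2 * Real.sqrt 2 * kkDist (P : Set (H →L[ℂ] H)) (Q : Set (H →L[ℂ] H)) := by
  obtain ⟨-, -, τM, htM⟩ := hM
  obtain ⟨-, -, τN, htN⟩ := hN
  have hsqrt : (2 : ℝ) < 2 * Real.sqrt 2 := by linarith [Real.one_lt_sqrt_two]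
  rw [kkDist_eq_sInf (M : Set (H →L[ℂ] H)), kkDist_eq_sInf (P : Set (H →L[ℂ] H))]
  refine le_sInf_add_mul_sInf ⟨2, kkAdmissible_two (zero_mem M) (zero_mem N)⟩
    ⟨2, kkAdmissible_two (zero_mem P) (zero_mem Q)⟩ (by positivity) fun γ₁ h₁ γ₂ h₂ => ?_
  have hγ : γ₁ + 2 * γ₂ < γ₁ + 2 * Real.sqrt 2 * γ₂ := by
    linarith [mul_lt_mul_of_pos_right hsqrt h₂.1]
  refine kkDist_le ⟨by linarith [h₁.1, h₂.1], fun x hx hx1 => ?_, fun y hy hy1 => ?_⟩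
  · obtain ⟨m, hm, hm1, hxm⟩ := htN.exists_mem_centralizer_inter_near hQN h₁.2.1 h₂.2.2 hx hx1
    exact ⟨m, hm, hm1, hxm.trans_lt hγ⟩
  · obtain ⟨m, hm, hm1, hym⟩ := htM.exists_mem_centralizer_inter_near hPM h₁.2.2 h₂.2.1 hy hy1
    exact ⟨m, hm, hm1, hym.trans_lt hγ⟩

end KK
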